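/- Let t_f > t₀ and suppose the controllability Gramian W(t) is invertible for some (equivalently, by monotonicity of the Gramian quadratic form, every) t ∈ (t₀, t_f]. Then for the minimum-energy control u*(t) = Bᵀ e^{Aᵀ(t_f−t)} W(t_f)⁻¹ (x_f − g(t_f)) steering x₀ to x_f, the energy restricted to the subinterval [t₀, t], namely ∫_{t₀}^{t} ‖u*(s)‖² ds, equals (x_f − g(t_f))ᵀ W(t_f)⁻¹ e^{A(t_f−t)} W(t) e^{Aᵀ(t_f−t)} W(t_f)⁻¹ (x_f − g(t_f)); equivalently, with η = W(t_f)⁻¹(x_f − g(t_f)), the partial state displacement satisfies x(t) − g(t) = W(t) e^{Aᵀ(t_f−t)} η. -/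

import Mathlib

/-!
By the semigroup property `e^{(t_f-τ)Aᵀ} = e^{(t-τ)Aᵀ} e^{(t_f-t)Aᵀ}`, on `[t₀, t]` the control
`u*` has the form `τ ↦ (e^{(t-τ)A} B)ᵀ w` with `w = e^{(t_f-t)Aᵀ} η`, i.e. it is the
minimum-energy control for the horizon `t`. For any control of this form the constant vector
`w` comes out of the integrals: the displacement is `W(t) w` and the energy is `wᵀ W(t) w`.
The energy formula then follows from the symmetry of `W(t_f)`, hence of `W(t_f)⁻¹`.
-/

open Matrix MeasureTheory

attribute [local instance] Matrix.normedAddCommGroup Matrix.normedSpace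

open NormedSpace (exp)

namespace Matrix

section IntervalIntegral

variable {ι κ : Type*} [Fintype ι] [Fintype κ] {a b : ℝ}

theorem intervalIntegral_mulVec {F : ℝ → Matrix κ ι ℝ} (hF : Continuous F) (w : ι → ℝ) :
    (∫ s in a..b, F s) *ᵥ w = ∫ s in a..b, F s *ᵥ w :=
  (LinearMap.toContinuousLinearMap ((mulVecBilin ℝ ℝ).flip w)
    ).intervalIntegral_comp_comm (hF.intervalIntegrable a b) |>.symm

theorem transpose_intervalIntegral {F : ℝ → Matrix κ ι ℝ} (hF : Continuous F) :
    (∫ s in a..b, F s)ᵀ = ∫ s in a..b, (F s)ᵀ :=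
  (LinearMap.toContinuousLinearMap (transposeLinearEquiv κ ι ℝ ℝ).toLinearMap
    ).intervalIntegral_comp_comm (hF.intervalIntegrable a b) |>.symm

theorem dotProduct_intervalIntegral {y : ℝ → ι → ℝ} (hy : Continuous y) (v : ι → ℝ) :
    v ⬝ᵥ (∫ s in a..b, y s) = ∫ s in a..b, v ⬝ᵥ y s :=
  (LinearMap.toContinuousLinearMap (dotProductBilin ℝ ℝ v)
    ).intervalIntegral_comp_comm (hy.intervalIntegrable a b) |>.symm

end IntervalIntegral

theorem dotProduct_transpose_mul_mul_mulVec {ι κ R : Type*} [Fintype ι] [Fintype κ]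
    [CommSemiring R] (N : Matrix κ ι R) (M : Matrix κ κ R) (v : ι → R) :
    v ⬝ᵥ (Nᵀ * M * N) *ᵥ v = (N *ᵥ v) ⬝ᵥ M *ᵥ (N *ᵥ v) := by
  rw [← mulVec_mulVec, ← mulVec_mulVec, dotProduct_mulVec, vecMul_transpose, dotProduct_mulVec]

variable {ι : Type*} [Fintype ι] [DecidableEq ι]

theorem continuous_exp : Continuous (exp : Matrix ι ι ℝ → Matrix ι ι ℝ) :=
  open scoped Norms.Operator in NormedSpace.exp_continuous

theorem exp_add_smul (A : Matrix ι ι ℝ) (a b : ℝ) :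
    exp ((a + b) • A) = exp (a • A) * exp (b • A) := by
  rw [add_smul]
  exact exp_add_of_commute _ _ (((Commute.refl A).smul_left a).smul_right b)

theorem exp_smul_transpose (A : Matrix ι ι ℝ) (a : ℝ) :
    exp (a • Aᵀ) = (exp (a • A))ᵀ := by
  rw [← transpose_smul, exp_transpose]

end Matrix

section ControllabilityGramian

variable {ι κ : Type*} [Fintype ι] [DecidableEq ι] (A : Matrix ι ι ℝ) (B : Matrix ι κ ℝ)

noncomputable def impulseResponse (s : ℝ) : Matrix ι κ ℝ := exp (s • A) * B

theorem impulseResponse_transpose_mul_exp (s r : ℝ) :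
    (impulseResponse A B s)ᵀ * exp (r • Aᵀ) = Bᵀ * exp ((s + r) • Aᵀ) := by
  rw [impulseResponse, transpose_mul, ← exp_smul_transpose, Matrix.mul_assoc, ← exp_add_smul]

theorem continuous_impulseResponse : Continuous (impulseResponse A B) :=
  (continuous_exp.comp (continuous_id.smul continuous_const)).matrix_mul continuous_const

variable [Fintype κ]

noncomputable def controllabilityGramian (t₀ t : ℝ) : Matrix ι ι ℝ :=
  ∫ τ in t₀..t, impulseResponse A B (t - τ) * (impulseResponse A B (t - τ))ᵀ

theorem impulseResponse_mul_transpose (s : ℝ) :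
    impulseResponse A B s * (impulseResponse A B s)ᵀ
      = exp (s • A) * B * Bᵀ * exp (s • Aᵀ) := by
  simp only [impulseResponse, transpose_mul, exp_smul_transpose, Matrix.mul_assoc]

theorem continuous_gramian_integrand (t : ℝ) :
    Continuous fun τ => impulseResponse A B (t - τ) * (impulseResponse A B (t - τ))ᵀ := by
  have h := (continuous_impulseResponse A B).comp (continuous_sub_left t)
  exact h.matrix_mul h.matrix_transpose

theorem controllabilityGramian_isSymm (t₀ t : ℝ) :
    (controllabilityGramian A B t₀ t).IsSymm := by
  rw [IsSymm, controllabilityGramian,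
    transpose_intervalIntegral (continuous_gramian_integrand A B t)]
  simp only [transpose_mul, transpose_transpose]

theorem intervalIntegral_response_eq_controllabilityGramian_mulVec (t₀ t : ℝ) (w : ι → ℝ) :
    ∫ τ in t₀..t, exp ((t - τ) • A) *ᵥ (B *ᵥ ((impulseResponse A B (t - τ))ᵀ *ᵥ w))
      = controllabilityGramian A B t₀ t *ᵥ w := by
  rw [controllabilityGramian, intervalIntegral_mulVec (continuous_gramian_integrand A B t)]
  simp only [impulseResponse, mulVec_mulVec, Matrix.mul_assoc]

theorem intervalIntegral_energy_eq_dotProduct_controllabilityGramian_mulVec (t₀ t : ℝ)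
    (w : ι → ℝ) :
    ∫ τ in t₀..t, ∑ k, ((impulseResponse A B (t - τ))ᵀ *ᵥ w) k ^ 2
      = w ⬝ᵥ controllabilityGramian A B t₀ t *ᵥ w := by
  have hcont := continuous_gramian_integrand A B t
  rw [controllabilityGramian, intervalIntegral_mulVec hcont,
    dotProduct_intervalIntegral (hcont.matrix_mulVec continuous_const)]
  refine intervalIntegral.integral_congr fun τ _ => ?_
  rw [← mulVec_mulVec, dotProduct_mulVec, ← mulVec_transpose]
  simp only [dotProduct, sq]

end ControllabilityGramian

theorem partial_energy_and_partial_displacement_general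
    (n m : ℕ) (A : Matrix (Fin n) (Fin n) ℝ) (B : Matrix (Fin n) (Fin m) ℝ)
    (t₀ : ℝ)
    (g : ℝ → Fin n → ℝ)
    (W : ℝ → Matrix (Fin n) (Fin n) ℝ)
    (hW : ∀ t, W t = ∫ τ in t₀..t,
        NormedSpace.exp ((t - τ) • A) * B * Bᵀ * NormedSpace.exp ((t - τ) • Aᵀ))
    (tf : ℝ)
    (xf : Fin n → ℝ)
    (η : Fin n → ℝ) (hη : η = (W tf)⁻¹.mulVec (xf - g tf))
    (ustar : ℝ → Fin m → ℝ)
    (hustar : ∀ t, ustar t = Bᵀ.mulVec ((NormedSpace.exp ((tf - t) • Aᵀ)).mulVec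
        ((W tf)⁻¹.mulVec (xf - g tf))))
    (x : ℝ → Fin n → ℝ)
    (hx : ∀ t, x t = g t
        + ∫ τ in t₀..t, (NormedSpace.exp ((t - τ) • A)).mulVec (B.mulVec (ustar τ))) :
    ∀ t ∈ Set.Ioc t₀ tf,
      (∫ s in t₀..t, ∑ k, (ustar s k) ^ 2)
        = (xf - g tf) ⬝ᵥ ((W tf)⁻¹ * NormedSpace.exp ((tf - t) • A) * W t
            * NormedSpace.exp ((tf - t) • Aᵀ) * (W tf)⁻¹).mulVec (xf - g tf) ∧
      x t - g t = (W t).mulVec ((NormedSpace.exp ((tf - t) • Aᵀ)).mulVec η) := by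
  intro t _
  have hW_eq : W = controllabilityGramian A B t₀ := funext fun s => by
    simp only [hW, controllabilityGramian, impulseResponse_mul_transpose]
  subst hη
  have hu : ∀ τ, ustar τ = (impulseResponse A B (t - τ))ᵀ *ᵥ
      (exp ((tf - t) • Aᵀ) *ᵥ (W tf)⁻¹ *ᵥ (xf - g tf)) := fun τ => by
    rw [hustar, mulVec_mulVec, show tf - τ = (t - τ) + (tf - t) by ring,
      ← impulseResponse_transpose_mul_exp, ← mulVec_mulVec]
  have hWsymm : (W tf).IsSymm := hW_eq ▸ controllabilityGramian_isSymm A B t₀ tf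
  have hconj : (exp ((tf - t) • Aᵀ) * (W tf)⁻¹)ᵀ = (W tf)⁻¹ * exp ((tf - t) • A) := by
    rw [transpose_mul, hWsymm.inv.eq, exp_smul_transpose, transpose_transpose]
  refine ⟨?_, ?_⟩
  · simp only [hu, intervalIntegral_energy_eq_dotProduct_controllabilityGramian_mulVec, ← hW_eq]
    rw [← hconj, Matrix.mul_assoc _ (exp _), dotProduct_transpose_mul_mul_mulVec, mulVec_mulVec]
  · simp only [hx, add_sub_cancel_left, hu,
      intervalIntegral_response_eq_controllabilityGramian_mulVec, hW_eq]

/-- Let `t_f > t₀` and suppose the controllability Gramian `W(t)` is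
invertible for every `t ∈ (t₀, t_f]`. For the minimum-energy control
`u*(t) = Bᵀ e^{Aᵀ(t_f−t)} W(t_f)⁻¹ (x_f − g(t_f))` steering `x₀` to `x_f`, the energy
restricted to `[t₀, t]`, namely `∫_{t₀}^{t} ‖u*(s)‖² ds`, equals
`(x_f − g(t_f))ᵀ W(t_f)⁻¹ e^{A(t_f−t)} W(t) e^{Aᵀ(t_f−t)} W(t_f)⁻¹ (x_f − g(t_f))`;
equivalently, with `η = W(t_f)⁻¹ (x_f − g(t_f))`, the partial state displacement satisfies
`x(t) − g(t) = W(t) e^{Aᵀ(t_f−t)} η`. -/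
theorem partial_energy_and_partial_displacement
    (n m : ℕ) (A : Matrix (Fin n) (Fin n) ℝ) (B : Matrix (Fin n) (Fin m) ℝ)
    (f x₀ : Fin n → ℝ) (t₀ : ℝ)
    (g : ℝ → Fin n → ℝ)
    (hg : ∀ t, g t = (NormedSpace.exp ((t - t₀) • A)).mulVec x₀
        + ∫ τ in t₀..t, (NormedSpace.exp ((t - τ) • A)).mulVec f)
    (W : ℝ → Matrix (Fin n) (Fin n) ℝ)
    (hW : ∀ t, W t = ∫ τ in t₀..t,
        NormedSpace.exp ((t - τ) • A) * B * Bᵀ * NormedSpace.exp ((t - τ) • Aᵀ))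
    (tf : ℝ) (htf : t₀ < tf)
    (hinv : ∀ t ∈ Set.Ioc t₀ tf, IsUnit (W t).det)
    (xf : Fin n → ℝ)
    (η : Fin n → ℝ) (hη : η = (W tf)⁻¹.mulVec (xf - g tf))
    (ustar : ℝ → Fin m → ℝ)
    (hustar : ∀ t, ustar t = Bᵀ.mulVec ((NormedSpace.exp ((tf - t) • Aᵀ)).mulVec
        ((W tf)⁻¹.mulVec (xf - g tf))))
    (x : ℝ → Fin n → ℝ)
    (hx : ∀ t, x t = g t
        + ∫ τ in t₀..t, (NormedSpace.exp ((t - τ) • A)).mulVec (B.mulVec (ustar τ))) :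
    ∀ t ∈ Set.Ioc t₀ tf,
      (∫ s in t₀..t, ∑ k, (ustar s k) ^ 2)
        = (xf - g tf) ⬝ᵥ ((W tf)⁻¹ * NormedSpace.exp ((tf - t) • A) * W t
            * NormedSpace.exp ((tf - t) • Aᵀ) * (W tf)⁻¹).mulVec (xf - g tf) ∧
      x t - g t = (W t).mulVec ((NormedSpace.exp ((tf - t) • Aᵀ)).mulVec η) :=
  partial_energy_and_partial_displacement_general n m A B t₀ g W hW tf xf η hη ustar hustar x hx
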